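/- Let V be a real vector space of dimension 4n and Ω a complex-valued alternating 2-form on V whose ℂ-bilinear extension to V ⊗ ℂ satisfies Ω^{n+1} = 0 and Ω^n ∧ conj(Ω)^n ≠ 0. Then the kernel W := ker Ω ⊂ V ⊗ ℂ has complex dimension 2n and satisfies W ⊕ conj(W) = V ⊗ ℂ; in particular W ∩ V = 0, so W determines an almost complex structure on V. -/

import Mathlib

open TensorProduct

/-- The `k`-th wedge power of a 2-form, written out (up to a nonzero normalization
constant) as a sum over permutations; expressed as a plain function. -/
noncomputable def formPow {W : Type*} (Ω : W → W → ℂ) (k : ℕ) :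
    (Fin (2 * k) → W) → ℂ :=
  fun v => ∑ σ : Equiv.Perm (Fin (2 * k)),
    ((Equiv.Perm.sign σ : ℤ) : ℂ) *
      ∏ i : Fin k,
        Ω (v (σ ⟨2 * i.1, by have := i.2; omega⟩))
          (v (σ ⟨2 * i.1 + 1, by have := i.2; omega⟩))

/-- The wedge product of an `a`-form and a `b`-form (up to a nonzero normalization
constant), expressed as a plain function. -/
noncomputable def wedgeFun {W : Type*} {a b : ℕ}
    (α : (Fin a → W) → ℂ) (β : (Fin b → W) → ℂ) : (Fin (a + b) → W) → ℂ :=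
  fun v => ∑ σ : Equiv.Perm (Fin (a + b)),
    ((Equiv.Perm.sign σ : ℤ) : ℂ) *
      (α (fun i => v (σ (Fin.castAdd b i))) * β (fun j => v (σ (Fin.natAdd a j))))

/-!
Write `W = ker Ω`. Since `Ωⁿ` is the alternatization of `∏ Ω(v₂ᵢ, v₂ᵢ₊₁)`, a vector of
`W ∩ conj W` annihilates `Ωⁿ` and `conj(Ω)ⁿ`, hence the top-degree form `Ωⁿ ∧ conj(Ω)ⁿ`; completing
a nonzero such vector to a basis shows that this form would vanish, so `W ∩ conj W = 0` and
`dim W ≤ 2n`. Conversely, if `dim W < 2n`, the rank of `Ω` is at least `2n + 1` and `Ω` admits a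
symplectic family `e₀, f₀, …, eₙ, fₙ`; on it `Ωⁿ⁺¹` is a sum over the permutations preserving the
pairs `{eᵢ, fᵢ}`, each contributing `+1`, contradicting `Ωⁿ⁺¹ = 0`. Real dimension counting then
gives `W ⊕ conj W = V ⊗ ℂ`, and a real vector of `W` lies in `W ∩ conj W`.
-/

open Equiv Equiv.Perm

theorem Equiv.Perm.exists_eq_prodShear {ι β : Type*} [Finite ι] [Finite β] [Nonempty β]
    (σ : Perm (ι × β)) (hσ : ∀ i b b', (σ (i, b)).1 = (σ (i, b')).1) :
    ∃ (π : Perm ι) (s : ι → Perm β), σ = prodShear π s := by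
  obtain ⟨b₀⟩ := ‹Nonempty β›
  set π₀ : ι → ι := fun i => (σ (i, b₀)).1
  set s₀ : ι → β → β := fun i b => (σ (i, b)).2
  have hσ_eq : ∀ i b, σ (i, b) = (π₀ i, s₀ i b) := fun i b => Prod.ext (hσ i b b₀) rfl
  have hs₀ : ∀ i, (s₀ i).Bijective := fun i => Finite.injective_iff_bijective.mp fun b b' h =>
    congrArg Prod.snd (σ.injective (by rw [hσ_eq, hσ_eq, h] : σ (i, b) = σ (i, b')))
  have hπ₀ : π₀.Injective := fun i i' h => by
    obtain ⟨b, hb⟩ := (hs₀ i).2 (s₀ i' b₀)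
    exact congrArg Prod.fst (σ.injective (by rw [hσ_eq, hσ_eq, hb, h] : σ (i, b) = σ (i', b₀)))
  exact ⟨ofBijective π₀ (Finite.injective_iff_bijective.mp hπ₀),
    fun i => ofBijective (s₀ i) (hs₀ i), Equiv.ext fun ⟨i, b⟩ => hσ_eq i b⟩

theorem Equiv.Perm.sign_prodShear {ι β : Type*} [Fintype ι] [DecidableEq ι] [Fintype β]
    [DecidableEq β] (π : Perm ι) (s : ι → Perm β) :
    sign (prodShear π s) = sign π ^ Fintype.card β * ∏ i, sign (s i) := by
  have : prodShear π s = prodCongrLeft (fun _ : β => π) * prodCongrRight s := rfl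
  rw [this, sign_mul, sign_prodCongrLeft, sign_prodCongrRight, Finset.prod_const,
    Finset.card_univ]

/-- Only the permutations mapping pairs to pairs contribute, and each of them contributes `1`. -/
theorem sum_sign_mul_prod_ne_zero {K M ι : Type*} [Field K] [CharZero K] [Fintype ι]
    [DecidableEq ι] (B : M → M → K) (h : ι × Fin 2 → M)
    (hcross : ∀ p q, p.1 ≠ q.1 → B (h p) (h q) = 0)
    (hdiag : ∀ i (τ : Perm (Fin 2)), B (h (i, τ 0)) (h (i, τ 1)) = sign τ) :
    ∑ σ : Perm (ι × Fin 2), (sign σ : K) * ∏ i, B (h (σ (i, 0))) (h (σ (i, 1))) ≠ 0 := by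
  classical
  set term : Perm (ι × Fin 2) → K := fun σ => (sign σ : K) * ∏ i, B (h (σ (i, 0))) (h (σ (i, 1)))
  have term_prodShear : ∀ π s, term (prodShear π s) = 1 := by
    intro π s
    simp only [term, prodShear_apply, hdiag, sign_prodShear, Fintype.card_fin, Int.units_sq,
      one_mul]
    push_cast
    rw [← Finset.prod_mul_distrib]
    exact Finset.prod_eq_one fun i _ => by norm_cast; rw [Int.units_mul_self]; rfl
  have term_eq_one : ∀ σ, term σ ≠ 0 → term σ = 1 := by
    intro σ hσ
    have hblock : ∀ i, (σ (i, 0)).1 = (σ (i, 1)).1 := fun i => by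
      by_contra hne
      exact hσ (mul_eq_zero_of_right _ (Finset.prod_eq_zero (Finset.mem_univ i) (hcross _ _ hne)))
    obtain ⟨π, s, rfl⟩ := exists_eq_prodShear σ fun i b b' => by
      fin_cases b <;> fin_cases b' <;> simp [hblock]
    exact term_prodShear π s
  have hone : term 1 = 1 := term_prodShear 1 fun _ => 1
  rw [← Finset.sum_filter_ne_zero,
    Finset.sum_congr rfl fun σ hσ => term_eq_one σ (Finset.mem_filter.mp hσ).2,
    Finset.sum_const, nsmul_one, Nat.cast_ne_zero, Finset.card_ne_zero]
  exact ⟨1, Finset.mem_filter.mpr ⟨Finset.mem_univ _, hone ▸ one_ne_zero⟩⟩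

def finPairEquiv (k : ℕ) : Fin k × Fin 2 ≃ Fin (2 * k) :=
  finProdFinEquiv.trans (finCongr (Nat.mul_comm k 2))

lemma finPairEquiv_apply_val {k : ℕ} (p : Fin k × Fin 2) :
    (finPairEquiv k p : ℕ) = 2 * p.1 + p.2 := by
  simp [finPairEquiv, add_comm]

theorem formPow_eq_sum_perm_prod {W : Type*} (Ω : W → W → ℂ) (k : ℕ) (v : Fin (2 * k) → W) :
    formPow Ω k v = ∑ τ : Perm (Fin k × Fin 2), (sign τ : ℂ) *
      ∏ i, Ω (v (finPairEquiv k (τ (i, 0)))) (v (finPairEquiv k (τ (i, 1)))) := by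
  have pair_zero : ∀ (i : Fin k) h, (⟨2 * i, h⟩ : Fin (2 * k)) = finPairEquiv k (i, 0) :=
    fun i h => Fin.ext (by simp [finPairEquiv_apply_val])
  have pair_one : ∀ (i : Fin k) h, (⟨2 * i + 1, h⟩ : Fin (2 * k)) = finPairEquiv k (i, 1) :=
    fun i h => Fin.ext (by simp [finPairEquiv_apply_val])
  simp only [formPow, pair_zero, pair_one]
  rw [← (permCongr (finPairEquiv k)).sum_comp]
  simp [sign_permCongr]

lemma MultilinearMap.alternatization_apply_eq_zero_of_mem_range {R M N ι : Type*} [Semiring R]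
    [AddCommMonoid M] [Module R M] [AddCommGroup N] [Module R N] [Fintype ι] [DecidableEq ι]
    {f : MultilinearMap R (fun _ : ι => M) N} {w : M}
    (hf : ∀ v : ι → M, w ∈ Set.range v → f v = 0) {v : ι → M} (hv : w ∈ Set.range v) :
    MultilinearMap.alternatization f v = 0 := by
  rw [MultilinearMap.alternatization_apply]
  refine Finset.sum_eq_zero fun σ _ => ?_
  rw [MultilinearMap.domDomCongr_apply, hf _ (by rwa [← Function.comp_def, EquivLike.range_comp]),
    smul_zero]

lemma AlternatingMap.eq_zero_of_forall_mem_range {K M ι : Type*} [Field K] [AddCommGroup M]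
    [Module K M] [FiniteDimensional K M] [Fintype ι] [DecidableEq ι]
    (hι : Fintype.card ι = Module.finrank K M) (f : M [⋀^ι]→ₗ[K] K) {w : M} (hw : w ≠ 0)
    (hf : ∀ v : ι → M, w ∈ Set.range v → f v = 0) : f = 0 := by
  have hli : LinearIndepOn K id ({w} : Set M) :=
    (linearIndepOn_singleton_iff (R := K) (v := id)).mpr hw
  let b₀ := Module.Basis.extend hli
  let e := b₀.indexEquiv
    ((Module.finBasisOfFinrankEq K M hι.symm).reindex (Fintype.equivFin ι).symm)
  have hwb : w ∈ Set.range (b₀.reindex e) := by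
    rw [Module.Basis.range_reindex, Module.Basis.range_extend]
    exact hli.subset_extend _ rfl
  rw [f.eq_smul_basis_det (b₀.reindex e), hf _ hwb, zero_smul]

section PowForm

variable {R M : Type*} [CommRing R] [AddCommGroup M] [Module R M]

def prodPairs (B : M →ₗ[R] M →ₗ[R] R) (ι : Type*) [Fintype ι] :
    MultilinearMap R (fun _ : ι × Fin 2 => M) R :=
  ((MultilinearMap.mkPiAlgebra R ι R).compMultilinearMap fun _ =>
      (LinearMap.uncurryLeft ((MultilinearMap.ofSubsingletonₗ R R M R 0).toLinearMap ∘ₗ B) :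
        MultilinearMap R (fun _ : Fin 2 => M) R)).domDomCongr (sigmaEquivProd ι (Fin 2))

@[simp]
lemma prodPairs_apply (B : M →ₗ[R] M →ₗ[R] R) (ι : Type*) [Fintype ι] (v : ι × Fin 2 → M) :
    prodPairs B ι v = ∏ i, B (v (i, 0)) (v (i, 1)) := by
  simp [prodPairs, Sigma.curry]
  rfl

lemma prodPairs_apply_eq_zero_of_mem_range (B : M →ₗ[R] M →ₗ[R] R) {ι : Type*} [Fintype ι] {w : M}
    (hw₁ : ∀ z, B w z = 0) (hw₂ : ∀ z, B z w = 0) {v : ι × Fin 2 → M} (hv : w ∈ Set.range v) :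
    prodPairs B ι v = 0 := by
  obtain ⟨⟨i, r⟩, rfl⟩ := hv
  rw [prodPairs_apply]
  refine Finset.prod_eq_zero (Finset.mem_univ i) ?_
  fin_cases r
  exacts [hw₁ _, hw₂ _]

variable {M : Type*} [AddCommGroup M] [Module ℂ M]

noncomputable def powForm (B : M →ₗ[ℂ] M →ₗ[ℂ] ℂ) (k : ℕ) : M [⋀^Fin (2 * k)]→ₗ[ℂ] ℂ :=
  (MultilinearMap.alternatization (prodPairs B (Fin k))).domDomCongr (finPairEquiv k)

lemma coe_powForm (B : M →ₗ[ℂ] M →ₗ[ℂ] ℂ) (k : ℕ) :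
    ⇑(powForm B k) = formPow (fun u v => B u v) k := by
  ext v
  simp [powForm, formPow_eq_sum_perm_prod, MultilinearMap.alternatization_apply, Units.smul_def]

lemma powForm_apply_eq_zero_of_mem_ker {B : M →ₗ[ℂ] M →ₗ[ℂ] ℂ} (hB : B.IsAlt) {k : ℕ} {w : M}
    (hw : w ∈ LinearMap.ker B) {v : Fin (2 * k) → M} (hv : w ∈ Set.range v) :
    powForm B k v = 0 := by
  rw [LinearMap.mem_ker] at hw
  rw [powForm, AlternatingMap.domDomCongr_apply]
  refine MultilinearMap.alternatization_apply_eq_zero_of_mem_range (w := w)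
    (fun v hv => prodPairs_apply_eq_zero_of_mem_range B (fun z => ?_) (fun z => ?_) hv) ?_
  · rw [hw, LinearMap.zero_apply]
  · rw [hB.eq_iff, hw, LinearMap.zero_apply]
  · rwa [EquivLike.range_comp]

end PowForm

section Wedge

variable {M : Type*} [AddCommGroup M] [Module ℂ M]

noncomputable def mulFinAdd {a b : ℕ} (F : MultilinearMap ℂ (fun _ : Fin a => M) ℂ)
    (G : MultilinearMap ℂ (fun _ : Fin b => M) ℂ) :
    MultilinearMap ℂ (fun _ : Fin (a + b) => M) ℂ :=
  ((LinearMap.mul' ℂ ℂ).compMultilinearMap (F.domCoprod G)).domDomCongr finSumFinEquiv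

@[simp]
lemma mulFinAdd_apply {a b : ℕ} (F : MultilinearMap ℂ (fun _ : Fin a => M) ℂ)
    (G : MultilinearMap ℂ (fun _ : Fin b => M) ℂ) (v : Fin (a + b) → M) :
    mulFinAdd F G v = F (fun i => v (Fin.castAdd b i)) * G (fun j => v (Fin.natAdd a j)) := by
  simp [mulFinAdd]

lemma wedgeFun_eq_alternatization {a b : ℕ} (F : MultilinearMap ℂ (fun _ : Fin a => M) ℂ)
    (G : MultilinearMap ℂ (fun _ : Fin b => M) ℂ) :
    wedgeFun ⇑F ⇑G = ⇑(MultilinearMap.alternatization (mulFinAdd F G)) := by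
  ext v
  simp [wedgeFun, MultilinearMap.alternatization_apply, Units.smul_def]

lemma mulFinAdd_apply_eq_zero_of_mem_range {a b : ℕ}
    {F : MultilinearMap ℂ (fun _ : Fin a => M) ℂ} {G : MultilinearMap ℂ (fun _ : Fin b => M) ℂ}
    {w : M} (hF : ∀ v : Fin a → M, w ∈ Set.range v → F v = 0)
    (hG : ∀ v : Fin b → M, w ∈ Set.range v → G v = 0)
    {v : Fin (a + b) → M} (hv : w ∈ Set.range v) : mulFinAdd F G v = 0 := by
  obtain ⟨t, rfl⟩ := hv
  rw [mulFinAdd_apply]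
  induction t using Fin.addCases with
  | left i => rw [hF _ ⟨i, rfl⟩, zero_mul]
  | right j => rw [hG _ ⟨j, rfl⟩, mul_zero]

theorem wedgeFun_formPow_eq_zero_of_mem_ker [FiniteDimensional ℂ M]
    {B B' : M →ₗ[ℂ] M →ₗ[ℂ] ℂ} (hB : B.IsAlt) (hB' : B'.IsAlt)
    {a b : ℕ} (hM : Module.finrank ℂ M = 2 * a + 2 * b) {w : M} (hw : w ≠ 0)
    (hwB : w ∈ LinearMap.ker B) (hwB' : w ∈ LinearMap.ker B') :
    wedgeFun (formPow (fun u v => B u v) a) (formPow (fun u v => B' u v) b) = 0 := by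
  have hzero : MultilinearMap.alternatization
      (mulFinAdd (powForm B a).toMultilinearMap (powForm B' b).toMultilinearMap) = 0 :=
    AlternatingMap.eq_zero_of_forall_mem_range (by simp [hM]) _ hw fun _ hv =>
      MultilinearMap.alternatization_apply_eq_zero_of_mem_range (fun _ hv =>
        mulFinAdd_apply_eq_zero_of_mem_range (fun _ => powForm_apply_eq_zero_of_mem_ker hB hwB)
          (fun _ => powForm_apply_eq_zero_of_mem_ker hB' hwB') hv) hv
  rw [← coe_powForm, ← coe_powForm]
  exact (wedgeFun_eq_alternatization _ _).trans (congrArg DFunLike.coe hzero)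

end Wedge
section Symplectic

variable {K M : Type*} [Field K] [AddCommGroup M] [Module K M]

structure IsSymplecticFamily {ι : Type*} [DecidableEq ι] (B : M →ₗ[K] M →ₗ[K] K)
    (e f : ι → M) : Prop where
  apply_e_f : ∀ i j, B (e i) (f j) = if i = j then 1 else 0
  apply_e_e : ∀ i j, B (e i) (e j) = 0
  apply_f_f : ∀ i j, B (f i) (f j) = 0

lemma LinearMap.exists_notMem_ker_forall_apply_eq_zero [FiniteDimensional K M]
    (B : M →ₗ[K] M →ₗ[K] K) {ι : Type*} [Fintype ι] (x : ι → M)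
    (h : Module.finrank K (LinearMap.ker B) + Fintype.card ι < Module.finrank K M) :
    ∃ u ∉ LinearMap.ker B, ∀ i, B (x i) u = 0 := by
  set φ : M →ₗ[K] ι → K := LinearMap.pi fun i => B (x i)
  have hφ : Module.finrank K M ≤ Module.finrank K (LinearMap.ker φ) + Fintype.card ι := by
    have := φ.finrank_range_add_finrank_ker
    have := (LinearMap.range φ).finrank_le
    rw [Module.finrank_fintype_fun_eq_card] at this
    omega
  obtain ⟨u, huφ, huB⟩ := SetLike.not_le_iff_exists.mp
    fun hle : LinearMap.ker φ ≤ LinearMap.ker B => absurd (Submodule.finrank_mono hle) (by omega)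
  exact ⟨u, huB, fun i => congrFun (LinearMap.mem_ker.mp huφ : φ u = 0) i⟩

namespace IsSymplecticFamily

variable {B : M →ₗ[K] M →ₗ[K] K} {k : ℕ} {e f : Fin k → M}

lemma snoc (hB : B.IsAlt) (h : IsSymplecticFamily B e f) {u c : M}
    (hu : ∀ i, B (e i) u = 0 ∧ B (f i) u = 0) (hc : ∀ i, B (e i) c = 0 ∧ B (f i) c = 0)
    (huc : B u c = 1) : IsSymplecticFamily B (Fin.snoc e u : Fin (k + 1) → M) (Fin.snoc f c) := by
  have hu' : ∀ i, B u (e i) = 0 ∧ B u (f i) = 0 := fun i =>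
    ⟨hB.eq_iff.mp (hu i).1, hB.eq_iff.mp (hu i).2⟩
  have hc' : ∀ i, B c (e i) = 0 ∧ B c (f i) = 0 := fun i =>
    ⟨hB.eq_iff.mp (hc i).1, hB.eq_iff.mp (hc i).2⟩
  refine ⟨?_, ?_, ?_⟩ <;>
  simp [Fin.forall_fin_succ', h.apply_e_f, h.apply_e_e, h.apply_f_f, hu, hc, hu', hc', huc,
    hB.self_eq_zero, Fin.castSucc_ne_last, (Fin.castSucc_ne_last _).symm]

lemma exists_snoc [FiniteDimensional K M] (hB : B.IsAlt) (h : IsSymplecticFamily B e f)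
    (hk : Module.finrank K (LinearMap.ker B) + 2 * k < Module.finrank K M) :
    ∃ u c, IsSymplecticFamily B (Fin.snoc e u : Fin (k + 1) → M) (Fin.snoc f c) := by
  obtain ⟨u, huB, hu⟩ := B.exists_notMem_ker_forall_apply_eq_zero (Sum.elim e f)
    (by simpa [two_mul] using hk)
  obtain ⟨z, hz⟩ : ∃ z, B u z ≠ 0 := by
    by_contra! hz
    exact huB (LinearMap.ext hz)
  have hf_e : ∀ i j, B (f i) (e j) = -if j = i then 1 else 0 := fun i j => by
    rw [← h.apply_e_f, hB.neg]
  set c := z - ∑ i, (B (e i) z • f i - B (f i) z • e i)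
  have hc : ∀ i, B (e i) c = 0 ∧ B (f i) c = 0 := fun i => by
    simp [c, h.apply_e_f, h.apply_e_e, h.apply_f_f, hf_e]
  have hu_e : ∀ i, B u (e i) = 0 := fun i => hB.eq_iff.mp (hu (.inl i))
  have hu_f : ∀ i, B u (f i) = 0 := fun i => hB.eq_iff.mp (hu (.inr i))
  have huc : B u c = B u z := by simp [c, hu_e, hu_f]
  refine ⟨u, (B u z)⁻¹ • c, h.snoc hB (fun i => ⟨hu (.inl i), hu (.inr i)⟩)
    (fun i => by simp [hc]) (by simp [huc, hz])⟩

end IsSymplecticFamily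

lemma exists_isSymplecticFamily [FiniteDimensional K M] {B : M →ₗ[K] M →ₗ[K] K}
    (hB : B.IsAlt) {k : ℕ}
    (hk : Module.finrank K (LinearMap.ker B) + 2 * k ≤ Module.finrank K M + 1) :
    ∃ e f : Fin k → M, IsSymplecticFamily B e f := by
  induction k with
  | zero => exact ⟨Fin.elim0, Fin.elim0, ⟨nofun, nofun, nofun⟩⟩
  | succ k ih =>
    obtain ⟨e, f, h⟩ := ih (by omega)
    obtain ⟨u, c, h'⟩ := h.exists_snoc hB (by omega)
    exact ⟨_, _, h'⟩

end Symplectic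

section FormPowNeZero

variable {M : Type*} [AddCommGroup M] [Module ℂ M] {B : M →ₗ[ℂ] M →ₗ[ℂ] ℂ}

lemma IsSymplecticFamily.formPow_ne_zero (hB : B.IsAlt) {k : ℕ} {e f : Fin k → M}
    (h : IsSymplecticFamily B e f) : formPow (fun u v => B u v) k ≠ 0 := by
  set g : Fin k × Fin 2 → M := fun p => ![e p.1, f p.1] p.2
  have hcross : ∀ p q : Fin k × Fin 2, p.1 ≠ q.1 → B (g p) (g q) = 0 := by
    rintro ⟨i, r⟩ ⟨j, r'⟩ (hij : i ≠ j)
    fin_cases r <;> fin_cases r' <;>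
      simp [g, h.apply_e_f, h.apply_e_e, h.apply_f_f, hij, ← hB.neg (e j), Ne.symm hij]
  have hdiag : ∀ i (τ : Perm (Fin 2)), B (g (i, τ 0)) (g (i, τ 1)) = sign τ := by
    intro i τ
    rcases (by decide : ∀ τ : Perm (Fin 2), τ = 1 ∨ τ = swap 0 1) τ with rfl | rfl
    · simp [g, h.apply_e_f]
    · simp [g, ← hB.neg (e i), h.apply_e_f]
  intro h0
  refine sum_sign_mul_prod_ne_zero (fun u v => B u v) g hcross hdiag ?_
  simpa [formPow_eq_sum_perm_prod] using congrFun h0 (g ∘ (finPairEquiv k).symm)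

theorem finrank_le_finrank_ker_add_of_formPow_eq_zero [FiniteDimensional ℂ M] (hB : B.IsAlt)
    {k : ℕ} (h : formPow (fun u v => B u v) (k + 1) = 0) :
    Module.finrank ℂ M ≤ Module.finrank ℂ (LinearMap.ker B) + 2 * k := by
  by_contra! hlt
  obtain ⟨e, f, hef⟩ := exists_isSymplecticFamily hB (k := k + 1) (by omega)
  exact hef.formPow_ne_zero hB h

end FormPowNeZero

lemma LinearMap.isAlt_of_forall_one_tmul {R A V : Type*} [CommRing R] [Field A] [CharZero A]
    [Algebra R A] [AddCommGroup V] [Module R V] (B : A ⊗[R] V →ₗ[A] A ⊗[R] V →ₗ[A] A)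
    (h : ∀ x, B (1 ⊗ₜ x) (1 ⊗ₜ x) = 0) : B.IsAlt := by
  have skew : B + B.flip = 0 := by
    ext x y
    have := h (x + y)
    simp only [tmul_add, map_add, LinearMap.add_apply, h] at this
    simpa [add_comm] using this
  intro u
  simpa using congr($skew u u)

noncomputable def conjTensor (V : Type*) [AddCommGroup V] [Module ℝ V] :
    ℂ ⊗[ℝ] V →ₛₗ[starRingEnd ℂ] ℂ ⊗[ℝ] V where
  toFun := TensorProduct.map Complex.conjAe.toLinearMap LinearMap.id
  map_add' := map_add _
  map_smul' a u := by
    induction u using TensorProduct.induction_on with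
    | zero => simp
    | tmul b x => simp [smul_tmul']
    | add u v hu hv => simp_all

@[simp]
lemma conjTensor_tmul {V : Type*} [AddCommGroup V] [Module ℝ V] (a : ℂ) (x : V) :
    conjTensor V (a ⊗ₜ x) = star a ⊗ₜ x := rfl

@[simp]
lemma conjTensor_conjTensor {V : Type*} [AddCommGroup V] [Module ℝ V] (u : ℂ ⊗[ℝ] V) :
    conjTensor V (conjTensor V u) = u := by
  induction u using TensorProduct.induction_on with
  | zero => simp
  | tmul b x => simp
  | add u v hu hv => simp_all

section ConjBilin

variable {M : Type*} [AddCommGroup M] [Module ℂ M]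

noncomputable def conjBilin (B : M →ₗ[ℂ] M →ₗ[ℂ] ℂ) (c : M →ₛₗ[starRingEnd ℂ] M) :
    M →ₗ[ℂ] M →ₗ[ℂ] ℂ :=
  LinearMap.mk₂ ℂ (fun u v => star (B (c u) (c v))) (by simp) (by simp) (by simp) (by simp)

@[simp]
lemma conjBilin_apply (B : M →ₗ[ℂ] M →ₗ[ℂ] ℂ) (c : M →ₛₗ[starRingEnd ℂ] M) (u v : M) :
    conjBilin B c u v = star (B (c u) (c v)) := rfl

lemma LinearMap.IsAlt.conjBilin {B : M →ₗ[ℂ] M →ₗ[ℂ] ℂ} (hB : B.IsAlt)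
    (c : M →ₛₗ[starRingEnd ℂ] M) : (conjBilin B c).IsAlt := fun u => by
  simp [hB.self_eq_zero]

lemma mem_ker_conjBilin {B : M →ₗ[ℂ] M →ₗ[ℂ] ℂ} {c : M →ₛₗ[starRingEnd ℂ] M} {w : M}
    (hw : c w ∈ LinearMap.ker B) : w ∈ LinearMap.ker (conjBilin B c) := by
  ext z
  simp [LinearMap.mem_ker.mp hw]

end ConjBilin

lemma finrank_sup_map_of_inf_eq_bot {E : Type*} [AddCommGroup E] [Module ℂ E] [Module ℝ E]
    [IsScalarTower ℝ ℂ E] [FiniteDimensional ℂ E] (W : Submodule ℂ E) {c : E →ₗ[ℝ] E}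
    (hc : Function.Involutive c)
    (h : W.restrictScalars ℝ ⊓ (W.restrictScalars ℝ).map c = ⊥) :
    Module.finrank ℝ ↥(W.restrictScalars ℝ ⊔ (W.restrictScalars ℝ).map c) =
      4 * Module.finrank ℂ W := by
  have : FiniteDimensional ℝ E := Module.Finite.trans ℂ E
  have hsum := Submodule.finrank_sup_add_finrank_inf_eq (W.restrictScalars ℝ)
    ((W.restrictScalars ℝ).map c)
  have hmap : Module.finrank ℝ ↥((W.restrictScalars ℝ).map c) =
      Module.finrank ℝ ↥(W.restrictScalars ℝ) :=
    (LinearEquiv.ofInvolutive c hc).finrank_map_eq _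
  have hW : Module.finrank ℝ ↥(W.restrictScalars ℝ) = 2 * Module.finrank ℂ W := by
    rw [← Complex.finrank_real_complex]
    exact (Module.finrank_mul_finrank ℝ ℂ W).symm
  rw [h, finrank_bot] at hsum
  omega

/-- Let `V` be a real vector space of dimension `4n` and `Ω` a
complex-valued alternating 2-form on `V` whose ℂ-bilinear extension `ΩC` to
`V ⊗ ℂ` satisfies `Ω^{n+1} = 0` and `Ω^n ∧ conj(Ω)^n ≠ 0` (a C-symplectic form).
Then the kernel `W := ker ΩC ⊂ V ⊗ ℂ` has complex dimension `2n` and satisfies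
`W ⊕ conj(W) = V ⊗ ℂ`; in particular `W ∩ V = 0`, so `W` determines an almost
complex structure on `V`. -/
theorem c_symplectic_kernel_structure
    (V : Type*) [AddCommGroup V] [Module ℝ V] [FiniteDimensional ℝ V]
    (n : ℕ) (hdim : Module.finrank ℝ V = 4 * n)
    (conj : (ℂ ⊗[ℝ] V) →ₗ[ℝ] (ℂ ⊗[ℝ] V))
    (hconj : conj = TensorProduct.map Complex.conjAe.toLinearMap LinearMap.id)
    (Ω : V →ₗ[ℝ] V →ₗ[ℝ] ℂ)
    (hAlt : ∀ v : V, Ω v v = 0)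
    (ΩC : (ℂ ⊗[ℝ] V) →ₗ[ℂ] (ℂ ⊗[ℝ] V) →ₗ[ℂ] ℂ)
    (hext : ∀ x y : V, ΩC ((1 : ℂ) ⊗ₜ[ℝ] x) ((1 : ℂ) ⊗ₜ[ℝ] y) = Ω x y)
    (hpow : formPow (fun u v => ΩC u v) (n + 1) = 0)
    (hvol : wedgeFun (formPow (fun u v => ΩC u v) n)
        (formPow (fun u v => star (ΩC (conj u) (conj v))) n) ≠ 0) :
    Module.finrank ℂ (LinearMap.ker ΩC) = 2 * n
    ∧ ((LinearMap.ker ΩC).restrictScalars ℝ) ⊓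
        Submodule.map conj ((LinearMap.ker ΩC).restrictScalars ℝ) = ⊥
    ∧ ((LinearMap.ker ΩC).restrictScalars ℝ) ⊔
        Submodule.map conj ((LinearMap.ker ΩC).restrictScalars ℝ) = ⊤
    ∧ (∀ x : V, ((1 : ℂ) ⊗ₜ[ℝ] x) ∈ LinearMap.ker ΩC → x = 0) := by
  have hc : ∀ u, conj u = conjTensor V u := fun u => by rw [hconj]; rfl
  simp only [hc] at hvol
  have hΩC : ΩC.IsAlt := ΩC.isAlt_of_forall_one_tmul fun x => (hext x x).trans (hAlt x)
  have hdimℂ : Module.finrank ℂ (ℂ ⊗[ℝ] V) = 2 * n + 2 * n := by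
    rw [Module.finrank_baseChange, hdim]
    ring
  have hdimℝ : Module.finrank ℝ (ℂ ⊗[ℝ] V) = 8 * n := by
    rw [← Module.finrank_mul_finrank ℝ ℂ, Complex.finrank_real_complex, hdimℂ]
    ring
  have hreal : ∀ w ∈ LinearMap.ker ΩC, conj w ∈ LinearMap.ker ΩC → w = 0 := by
    intro w hw hcw
    by_contra hw0
    rw [hc] at hcw
    exact hvol (wedgeFun_formPow_eq_zero_of_mem_ker hΩC (hΩC.conjBilin (conjTensor V)) hdimℂ
      hw0 hw (mem_ker_conjBilin hcw))
  have hinv : Function.Involutive conj := fun u => by simp [hc]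
  set W := (LinearMap.ker ΩC).restrictScalars ℝ
  have hinf : W ⊓ W.map conj = ⊥ := by
    refine (Submodule.eq_bot_iff _).mpr fun u ⟨hu, w, hw, hwu⟩ => hreal u hu ?_
    rwa [← hwu, hinv]
  have hsup : Module.finrank ℝ ↥(W ⊔ W.map conj) = 4 * Module.finrank ℂ (LinearMap.ker ΩC) :=
    finrank_sup_map_of_inf_eq_bot _ hinv hinf
  have hupper := (W ⊔ W.map conj).finrank_le
  have hlower := finrank_le_finrank_ker_add_of_formPow_eq_zero hΩC hpow
  refine ⟨by omega, hinf, Submodule.eq_top_of_finrank_eq (by omega), fun x hx => ?_⟩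
  exact (Module.FaithfullyFlat.one_tmul_eq_zero_iff ℝ V x).mp (hreal _ hx (by simpa [hc] using hx))
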